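/- arXiv:2001.08584 — 2 statements merged into one kernel-verified Lean document; each statement's English description precedes it below -/
import Mathlib

section
/- Let R be an integral domain which is an algebra over ℚ, and let D : R → R be a derivation (an additive map satisfying the Leibniz rule D(ab) = a·D(b) + b·D(a)). Let q ∈ R be a prime element, let s ≥ 1 be an integer, and let p, f ∈ R be elements neither of which is divisible by q. If q^s·p divides D(q^s·p)·f, then q divides D(q). -/
/-!
Write `s = t + 1`. By the Leibniz rule,
`D (q ^ (t + 1) * p) = q ^ (t + 1) * D p + (t + 1) * q ^ t * p * D q`, so `q ^ (t + 1)` divides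
`q ^ t * ((t + 1) * p * f * D q)` and hence `q` divides `(t + 1) * p * f * D q`.
Since `t + 1` is a unit in a `ℚ`-algebra and the prime `q` divides neither `p` nor `f`,
it divides `D q`.
-/

theorem leibniz_pow_succ {R : Type*} [CommSemiring R] (D : R → R)
    (hleib : ∀ a b : R, D (a * b) = a * D b + b * D a) (a : R) (n : ℕ) :
    D (a ^ (n + 1)) = ((n + 1 : ℕ) : R) * a ^ n * D a := by
  induction n with
  | zero => simp
  | succ n ih =>
    rw [pow_succ' a (n + 1), hleib, ih]
    push_cast
    ring

theorem isUnit_natCast_of_algebraRat {R : Type*} [Ring R] [Algebra ℚ R] {n : ℕ} (hn : n ≠ 0) :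
    IsUnit (n : R) := by
  simpa using
    (isUnit_iff_ne_zero.mpr (Nat.cast_ne_zero.mpr hn : (n : ℚ) ≠ 0)).map (algebraMap ℚ R)

theorem dvd_of_pow_succ_dvd_pow_succ_mul_add_pow_mul {R : Type*} [CommRing R] [IsDomain R]
    {q : R} (hq : q ≠ 0) {t : ℕ} {x y : R} (h : q ^ (t + 1) ∣ q ^ (t + 1) * x + q ^ t * y) :
    q ∣ y := by
  rwa [dvd_add_right (dvd_mul_right _ _), pow_succ', mul_comm q,
    mul_dvd_mul_iff_left (pow_ne_zero t hq)] at h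

theorem weyl_key_divisibility_step_general
    {R : Type*} [CommRing R] [IsDomain R] [Algebra ℚ R]
    (D : R → R)
    (hleib : ∀ a b : R, D (a * b) = a * D b + b * D a)
    (q : R) (hq : Prime q)
    (s : ℕ) (hs : 1 ≤ s)
    (p f : R) (hp : ¬ q ∣ p) (hf : ¬ q ∣ f)
    (hdvd : q ^ s * p ∣ D (q ^ s * p) * f) :
    q ∣ D q := by
  obtain ⟨t, rfl⟩ := Nat.exists_eq_add_of_le' hs
  have hexpand : D (q ^ (t + 1) * p) * f
      = q ^ (t + 1) * (D p * f) + q ^ t * (((t + 1 : ℕ) : R) * p * f * D q) := by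
    rw [hleib, leibniz_pow_succ D hleib]
    ring
  have hdvd_rest : q ∣ ((t + 1 : ℕ) : R) * p * f * D q :=
    dvd_of_pow_succ_dvd_pow_succ_mul_add_pow_mul hq.ne_zero
      (hexpand ▸ (dvd_mul_right _ p).trans hdvd)
  have hq_not_dvd_succ : ¬ q ∣ ((t + 1 : ℕ) : R) := fun h ↦
    hq.not_isUnit (isUnit_of_dvd_unit h (isUnit_natCast_of_algebraRat t.succ_ne_zero))
  exact (hq.dvd_or_dvd hdvd_rest).resolve_left
    (hq.not_dvd_mul (hq.not_dvd_mul hq_not_dvd_succ hp) hf)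

/-- Let `R` be an integral domain which is a `ℚ`-algebra, and let
`D : R → R` be a derivation (additive and satisfying the Leibniz rule).  Let `q ∈ R`
be a prime element, `s ≥ 1` an integer, and `p, f ∈ R` elements neither of which is
divisible by `q`.  If `q ^ s * p` divides `D (q ^ s * p) * f`, then `q` divides `D q`. -/
theorem weyl_key_divisibility_step
    {R : Type*} [CommRing R] [IsDomain R] [Algebra ℚ R]
    (D : R → R)
    (hadd : ∀ a b : R, D (a + b) = D a + D b)
    (hleib : ∀ a b : R, D (a * b) = a * D b + b * D a)
    (q : R) (hq : Prime q)
    (s : ℕ) (hs : 1 ≤ s)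
    (p f : R) (hp : ¬ q ∣ p) (hf : ¬ q ∣ f)
    (hdvd : q ^ s * p ∣ D (q ^ s * p) * f) :
    q ∣ D q :=
  weyl_key_divisibility_step_general D hleib q hq s hs p f hp hf hdvd
end

section
/- Let R be an integral domain, σ a type of variables, w : σ → ℕ a weight function, and δ, p two nonzero multivariate polynomials in R[xᵢ : i ∈ σ]. If δ divides p, then the weighted-homogeneous component of δ of top weighted degree (the leading weighted-homogeneous form of δ) divides the leading weighted-homogeneous form of p. -/
/-!
Write `p = δ * q` and `L φ` for the top weighted-homogeneous component of `φ`. Only monomial pairs of top weight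
contribute to the component of `δ * q` of weight `deg δ + deg q`, so that component is `L δ * L q`.
Over a domain this product is nonzero, hence `deg (δ * q) = deg δ + deg q` and `L (δ * q) = L δ * L q`.
-/

open MvPolynomial

namespace MvPolynomial

variable {R σ : Type*}

section CommSemiring

variable [CommSemiring R] (w : σ → ℕ)

theorem coeff_eq_zero_of_weightedTotalDegree_lt {φ : MvPolynomial σ R} {d : σ →₀ ℕ}
    (hd : weightedTotalDegree w φ < Finsupp.weight w d) : coeff d φ = 0 :=
  notMem_support_iff.mp fun hmem => (le_weightedTotalDegree w hmem).not_gt hd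

theorem weightedHomogeneousComponent_weightedTotalDegree_ne_zero {φ : MvPolynomial σ R}
    (hφ : φ ≠ 0) : weightedHomogeneousComponent w (weightedTotalDegree w φ) φ ≠ 0 := by
  classical
  obtain ⟨d, hd, hdeg⟩ : ∃ d ∈ φ.support, weightedTotalDegree w φ = Finsupp.weight w d :=
    Finset.exists_mem_eq_sup φ.support (support_nonempty.mpr hφ) (Finsupp.weight w)
  intro h
  have hcoeff := congrArg (coeff d) h
  rw [coeff_weightedHomogeneousComponent, if_pos hdeg.symm, coeff_zero] at hcoeff
  exact mem_support_iff.mp hd hcoeff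

theorem weightedTotalDegree_mul_le (φ ψ : MvPolynomial σ R) :
    weightedTotalDegree w (φ * ψ) ≤ weightedTotalDegree w φ + weightedTotalDegree w ψ := by
  classical
  refine Finset.sup_le fun d hd => ?_
  obtain ⟨a, ha, b, hb, rfl⟩ := Finset.mem_add.mp (support_mul φ ψ hd)
  rw [map_add]
  exact add_le_add (le_weightedTotalDegree w ha) (le_weightedTotalDegree w hb)

theorem weightedHomogeneousComponent_mul_of_weightedTotalDegree_le {φ ψ : MvPolynomial σ R}
    {m n : ℕ} (hφ : weightedTotalDegree w φ ≤ m) (hψ : weightedTotalDegree w ψ ≤ n) :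
    weightedHomogeneousComponent w (m + n) (φ * ψ) =
      weightedHomogeneousComponent w m φ * weightedHomogeneousComponent w n ψ := by
  classical
  ext d
  rw [coeff_weightedHomogeneousComponent]
  split_ifs with hd
  · rw [coeff_mul, coeff_mul]
    refine Finset.sum_congr rfl fun x hx => ?_
    rw [← Finset.HasAntidiagonal.mem_antidiagonal.mp hx, map_add] at hd
    simp only [coeff_weightedHomogeneousComponent]
    -- if one factor has weight below its bound, the other exceeds its total degree
    rcases trichotomy_of_add_eq_add hd with ⟨h₁, h₂⟩ | h | h
    · rw [if_pos h₁, if_pos h₂]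
    · rw [if_neg h.ne, zero_mul,
        coeff_eq_zero_of_weightedTotalDegree_lt w (lt_of_le_of_lt hψ (by omega)), mul_zero]
    · rw [if_neg h.ne, mul_zero,
        coeff_eq_zero_of_weightedTotalDegree_lt w (lt_of_le_of_lt hφ (by omega)), zero_mul]
  · exact ((weightedHomogeneousComponent_isWeightedHomogeneous m φ).mul
      (weightedHomogeneousComponent_isWeightedHomogeneous n ψ)).coeff_eq_zero d hd |>.symm

end CommSemiring

section IsDomain

variable [CommRing R] [IsDomain R] (w : σ → ℕ)

theorem weightedTotalDegree_mul {φ ψ : MvPolynomial σ R} (hφ : φ ≠ 0) (hψ : ψ ≠ 0) :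
    weightedTotalDegree w (φ * ψ) = weightedTotalDegree w φ + weightedTotalDegree w ψ := by
  refine (weightedTotalDegree_mul_le w φ ψ).antisymm (not_lt.mp fun hlt => ?_)
  have hzero := weightedHomogeneousComponent_eq_zero (w := w) _ (φ * ψ) hlt
  rw [weightedHomogeneousComponent_mul_of_weightedTotalDegree_le w le_rfl le_rfl] at hzero
  exact mul_ne_zero (weightedHomogeneousComponent_weightedTotalDegree_ne_zero w hφ)
    (weightedHomogeneousComponent_weightedTotalDegree_ne_zero w hψ) hzero

theorem weightedHomogeneousComponent_weightedTotalDegree_mul {φ ψ : MvPolynomial σ R}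
    (hφ : φ ≠ 0) (hψ : ψ ≠ 0) :
    weightedHomogeneousComponent w (weightedTotalDegree w (φ * ψ)) (φ * ψ) =
      weightedHomogeneousComponent w (weightedTotalDegree w φ) φ *
        weightedHomogeneousComponent w (weightedTotalDegree w ψ) ψ := by
  rw [weightedTotalDegree_mul w hφ hψ,
    weightedHomogeneousComponent_mul_of_weightedTotalDegree_le w le_rfl le_rfl]

end IsDomain

end MvPolynomial

theorem leading_weighted_form_dvd_of_dvd_general
    {R σ : Type*} [CommRing R] [IsDomain R]
    (w : σ → ℕ) (δ p : MvPolynomial σ R) (hp : p ≠ 0)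
    (hdvd : δ ∣ p) :
    weightedHomogeneousComponent w (weightedTotalDegree w δ) δ ∣
      weightedHomogeneousComponent w (weightedTotalDegree w p) p := by
  obtain ⟨q, rfl⟩ := hdvd
  obtain ⟨hδ, hq⟩ := mul_ne_zero_iff.mp hp
  rw [weightedHomogeneousComponent_weightedTotalDegree_mul w hδ hq]
  exact dvd_mul_right _ _

/-- Over an integral domain `R`, for a weight function `w : σ → ℕ`
and nonzero multivariate polynomials `δ, p`, if `δ` divides `p` then the leading
weighted-homogeneous form of `δ` divides the leading weighted-homogeneous form of `p`. -/
theorem leading_weighted_form_dvd_of_dvd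
    {R σ : Type*} [CommRing R] [IsDomain R]
    (w : σ → ℕ) (δ p : MvPolynomial σ R) (hδ : δ ≠ 0) (hp : p ≠ 0)
    (hdvd : δ ∣ p) :
    weightedHomogeneousComponent w (weightedTotalDegree w δ) δ ∣
      weightedHomogeneousComponent w (weightedTotalDegree w p) p :=
  leading_weighted_form_dvd_of_dvd_general w δ p hp hdvd
end
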